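/- arXiv:1806.08692 — 5 statements merged into one kernel-verified Lean document; each statement's English description precedes it below -/
import Mathlib

section
/- For all real x ≥ 1 and y ≥ 0, f(x+y) ≤ f(x) + 1.5·y, where f(x) = log₂(x)/(log₂(2+log₂ x))². -/
/-!
Write `f x = g (logb 2 x)` with `g t = t / (logb 2 (2 + t))²`. For `0 ≤ s ≤ t` the denominator
of `g` is at least `1` and grows with `t`, so `g t ≤ g s + (t - s)`. Hence `f` grows by at most
the increment of `logb 2`, and `logb 2 (x + y) - logb 2 x ≤ y / (x log 2) ≤ y / log 2 ≤ 1.5 y`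
for `x ≥ 1`.
-/

noncomputable def f (x : ℝ) : ℝ := Real.logb 2 x / (Real.logb 2 (2 + Real.logb 2 x)) ^ 2

open Real

lemma div_sq_le_div_sq_add_sub {a a' d d' : ℝ} (ha : 0 ≤ a) (haa' : a ≤ a') (hd : 1 ≤ d)
    (hdd' : d ≤ d') : a' / d' ^ 2 ≤ a / d ^ 2 + (a' - a) := by
  calc a' / d' ^ 2 ≤ a' / d ^ 2 := by gcongr; linarith
    _ = a / d ^ 2 + (a' - a) / d ^ 2 := by ring
    _ ≤ a / d ^ 2 + (a' - a) := by
      gcongr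
      exact div_le_self (by linarith) (one_le_pow₀ hd)

lemma logb_add_sub_logb_le {b x y : ℝ} (hb : 1 < b) (hx : 0 < x) (hxy : 0 < x + y) :
    logb b (x + y) - logb b x ≤ y / (x * log b) := by
  have hlogb : 0 < log b := log_pos hb
  rw [← logb_div hxy.ne' hx.ne', logb, ← div_div]
  gcongr
  calc log ((x + y) / x) ≤ (x + y) / x - 1 := log_le_sub_one_of_pos (by positivity)
    _ = y / x := by field_simp; ring

lemma one_le_logb_two_two_add {t : ℝ} (ht : 0 ≤ t) : 1 ≤ logb 2 (2 + t) := by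
  rw [le_logb_iff_rpow_le one_lt_two (by linarith), rpow_one]
  linarith

lemma f_le_add_logb_sub {x x' : ℝ} (hx : 1 ≤ x) (hxx' : x ≤ x') :
    f x' ≤ f x + (logb 2 x' - logb 2 x) := by
  have hL : 0 ≤ logb 2 x := logb_nonneg one_lt_two hx
  have hLL' : logb 2 x ≤ logb 2 x' := logb_le_logb_of_le one_lt_two (by linarith) hxx'
  exact div_sq_le_div_sq_add_sub hL hLL' (one_le_logb_two_two_add hL)
    (logb_le_logb_of_le one_lt_two (by linarith) (by linarith))

theorem stmt_0 (x y : ℝ) (hx : 1 ≤ x) (hy : 0 ≤ y) :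
    f (x + y) ≤ f x + 1.5 * y := by
  have hlog2 : 2 / 3 < log 2 := by linarith [log_two_gt_d9]
  calc f (x + y) ≤ f x + (logb 2 (x + y) - logb 2 x) := f_le_add_logb_sub hx (by linarith)
    _ ≤ f x + y / (x * log 2) := by
      gcongr
      exact logb_add_sub_logb_le one_lt_two (by linarith) (by linarith)
    _ ≤ f x + 1.5 * y := by
      gcongr
      have hxlog2 : 1 ≤ 1.5 * (x * log 2) := by nlinarith
      rw [div_le_iff₀ (by positivity)]
      nlinarith [mul_le_mul_of_nonneg_left hxlog2 hy]
end

section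
/- For all real x > y ≥ 1 and c > 0, f(x+c) − f(y+c) ≤ f(x) − f(y), where f(x) = log₂(x)/(log₂(2+log₂ x))². Equivalently, z ↦ f(z+c) − f(z) is monotone decreasing on [1,∞). -/
open Set Real

theorem ConcaveOn.map_add_sub_map_le {𝕜 : Type*} [Field 𝕜] [LinearOrder 𝕜] [IsStrictOrderedRing 𝕜]
    {s : Set 𝕜} {φ : 𝕜 → 𝕜} (hφ : ConcaveOn 𝕜 s φ) {x y c : 𝕜} (hy : y ∈ s) (hxc : x + c ∈ s)
    (hxy : y < x) (hc : 0 ≤ c) : φ (x + c) - φ (y + c) ≤ φ x - φ y := by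
  have hd : 0 < x + c - y := by linarith
  set a := (x - y) / (x + c - y)
  set b := c / (x + c - y)
  have ha : 0 ≤ a := div_nonneg (by linarith) hd.le
  have hb : 0 ≤ b := div_nonneg hc hd.le
  have hab : a + b = 1 := by simp only [a, b]; field_simp; ring
  have hx : b * y + a * (x + c) = x := by simp only [a, b]; field_simp; ring
  have hyc : a * y + b * (x + c) = y + c := by simp only [a, b]; field_simp; ring
  have h₁ := hφ.2 hy hxc hb ha (by rwa [add_comm])
  have h₂ := hφ.2 hy hxc ha hb hab
  simp only [smul_eq_mul, hx, hyc] at h₁ h₂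
  linear_combination h₁ + h₂ - (φ y + φ (x + c)) * hab

theorem Real.two_mul_add_le_log_sub_log {z : ℝ} (hz₀ : 0 ≤ z) (hz₁ : z < 1) :
    2 * z + 2 / 3 * z ^ 3 ≤ log (1 + z) - log (1 - z) := by
  have h := sum_le_hasSum (Finset.range 2) (fun k _ ↦ by positivity)
    (hasSum_log_sub_log_of_abs_lt_one (abs_lt.2 ⟨by linarith, hz₁⟩))
  norm_num [Finset.sum_range_succ] at h
  linarith

theorem Real.le_log_two_add {t : ℝ} (ht : 0 ≤ t) :
    log 2 + 2 * (t / (t + 4)) + 2 / 3 * (t / (t + 4)) ^ 3 ≤ log (2 + t) := by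
  have hz : t / (t + 4) < 1 := (div_lt_one (by linarith)).2 (by linarith)
  have h := two_mul_add_le_log_sub_log (by positivity) hz
  -- `z = t / (t + 4)` is chosen so that `(1 + z) / (1 - z) = (2 + t) / 2`.
  have hsplit : log (2 + t) = log 2 + (log (1 + t / (t + 4)) - log (1 - t / (t + 4))) := by
    rw [← log_div (by positivity) (by linarith), ← log_mul two_ne_zero (by positivity)]
    congr 1
    field_simp
    ring
  linarith

theorem Real.two_mul_le_mul_log_two_add {t : ℝ} (ht : 0 ≤ t) : 2 * t ≤ (2 + t) * log (2 + t) := by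
  set z := t / (t + 4)
  have h := le_log_two_add ht
  have hz₀ : 0 ≤ z := by positivity
  have hgap : (2 + t) * (log 2 + 2 * z) - 2 * t =
      (log 2 * (t ^ 2 + 6 * t + 8) - 4 * t) / (t + 4) := by
    simp only [z]; field_simp; ring
  have hlin : 2 * t ≤ (2 + t) * (log 2 + 2 * z) := by
    rw [← sub_nonneg, hgap]
    exact div_nonneg (by nlinarith [log_two_gt_d9]) (by linarith)
  calc 2 * t ≤ (2 + t) * (log 2 + 2 * z) := hlin
    _ ≤ (2 + t) * log (2 + t) := by gcongr; nlinarith [pow_nonneg hz₀ 3]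

theorem Real.six_mul_le_mul_log_two_add {t : ℝ} (ht : 0 ≤ t) :
    6 * t ≤ (2 * t + 8) * log (2 + t) := by
  set z := t / (t + 4)
  have h := le_log_two_add ht
  have hz₀ : 0 ≤ z := by positivity
  have h3z : 3 * z ≤ log (2 + t) := by
    nlinarith [log_two_gt_d9, mul_nonneg (sq_nonneg (z - 3 / 4)) (by linarith : 0 ≤ z + 3 / 2)]
  calc 6 * t = (2 * t + 8) * (3 * z) := by simp only [z]; field_simp; ring
    _ ≤ (2 * t + 8) * log (2 + t) := by gcongr

noncomputable def g (u : ℝ) : ℝ := u / log (2 + u) ^ 2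

theorem hasDerivAt_log_two_add {t : ℝ} (ht : -2 < t) :
    HasDerivAt (fun u ↦ log (2 + u)) (2 + t)⁻¹ t := by
  simpa using ((hasDerivAt_id' t).const_add 2).log (by linarith)

theorem hasDerivAt_g {t : ℝ} (ht : -1 < t) :
    HasDerivAt g (((2 + t) * log (2 + t) - 2 * t) / ((2 + t) * log (2 + t) ^ 3)) t := by
  have hs : 0 < 2 + t := by linarith
  have hL : 0 < log (2 + t) := log_pos (by linarith)
  refine ((hasDerivAt_id t).div ((hasDerivAt_log_two_add (by linarith)).pow 2)
    (pow_ne_zero _ hL.ne')).congr_deriv ?_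
  simp only [Pi.pow_apply, id_eq, Nat.cast_ofNat]
  field_simp
  ring

theorem hasDerivAt_deriv_g_formula {t : ℝ} (ht : -1 < t) :
    HasDerivAt (fun u ↦ ((2 + u) * log (2 + u) - 2 * u) / ((2 + u) * log (2 + u) ^ 3))
      ((6 * t - (2 * t + 8) * log (2 + t)) / ((2 + t) ^ 2 * log (2 + t) ^ 4)) t := by
  have hs : 0 < 2 + t := by linarith
  have hL : 0 < log (2 + t) := log_pos (by linarith)
  have h₂ : HasDerivAt (fun u ↦ 2 + u) 1 t := (hasDerivAt_id t).const_add 2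
  have hlog := hasDerivAt_log_two_add (by linarith : -2 < t)
  refine (((h₂.mul hlog).sub ((hasDerivAt_id t).const_mul 2)).div (h₂.mul (hlog.pow 3))
    (mul_ne_zero hs.ne' (pow_ne_zero _ hL.ne'))).congr_deriv ?_
  simp only [Pi.mul_apply, Pi.pow_apply, Pi.sub_apply, id_eq, Nat.cast_ofNat]
  field_simp
  ring

theorem continuousOn_g : ContinuousOn g (Ici 0) :=
  fun _ ht ↦ (hasDerivAt_g (by linarith [mem_Ici.1 ht])).continuousAt.continuousWithinAt

theorem monotoneOn_g : MonotoneOn g (Ici 0) := by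
  refine monotoneOn_of_hasDerivWithinAt_nonneg (convex_Ici 0) continuousOn_g
    (fun t ht ↦ (hasDerivAt_g ?_).hasDerivWithinAt) fun t ht ↦ ?_ <;>
    rw [interior_Ici, mem_Ioi] at ht
  · linarith
  · have hL : 0 < log (2 + t) := log_pos (by linarith)
    have := two_mul_le_mul_log_two_add ht.le
    exact div_nonneg (by linarith) (by positivity)

theorem concaveOn_g : ConcaveOn ℝ (Ici 0) g := by
  refine concaveOn_of_hasDerivWithinAt2_nonpos (convex_Ici 0) continuousOn_g
    (fun t ht ↦ (hasDerivAt_g ?_).hasDerivWithinAt)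
    (fun t ht ↦ (hasDerivAt_deriv_g_formula ?_).hasDerivWithinAt) fun t ht ↦ ?_ <;>
    rw [interior_Ici, mem_Ioi] at ht
  · linarith
  · linarith
  · have := six_mul_le_mul_log_two_add ht.le
    exact div_nonpos_of_nonpos_of_nonneg (by linarith) (by positivity)

theorem Real.concaveOn_logb {b : ℝ} (hb : 1 ≤ b) : ConcaveOn ℝ (Ioi 0) (logb b) := by
  refine (strictConcaveOn_log_Ioi.concaveOn.smul (inv_nonneg.2 (log_nonneg hb))).congr
    fun x _ ↦ ?_
  simp only [smul_eq_mul, logb, inv_mul_eq_div]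

theorem Real.image_logb_Ici_one {b : ℝ} (hb : 1 < b) : logb b '' Ici 1 = Ici 0 := by
  ext u
  constructor
  · rintro ⟨x, hx, rfl⟩
    exact logb_nonneg hb hx
  · intro hu
    exact ⟨b ^ u, one_le_rpow hb.le hu, logb_rpow (by linarith) hb.ne'⟩

theorem f_eq_mul_g (x : ℝ) : f x = log 2 ^ 2 * g (logb 2 x) := by
  rw [f, g, show logb 2 (2 + logb 2 x) = log (2 + logb 2 x) / log 2 from rfl, div_pow,
    div_div_eq_mul_div]
  ring

theorem concaveOn_f : ConcaveOn ℝ (Ici 1) f := by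
  have hg := concaveOn_g
  have hg' := monotoneOn_g
  rw [← image_logb_Ici_one one_lt_two] at hg hg'
  have hcomp : ConcaveOn ℝ (Ici 1) (g ∘ logb 2) :=
    hg.comp ((concaveOn_logb one_le_two).subset (Ici_subset_Ioi.2 zero_lt_one)
      (convex_Ici 1)) hg'
  exact (hcomp.smul (sq_nonneg (log 2))).congr fun x _ ↦ (f_eq_mul_g x).symm

theorem stmt_5 (x y c : ℝ) (hy : 1 ≤ y) (hxy : y < x) (hc : 0 < c) :
    f (x + c) - f (y + c) ≤ f x - f y :=
  concaveOn_f.map_add_sub_map_le hy (by simp only [mem_Ici]; linarith) hxy hc.le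
end

section
/- Define h(x) = d·(log₂(2+x))² for a constant d ≥ 1, and h^(i) its i-fold iterate. Then for n ≥ 2, h^(i)(log₂ n) is decreasing in i until it reaches a constant, and the number of iterations needed for h^(i)(log₂ n) to drop below an absolute constant (depending on d) is at most log* n + O(1). -/
/-!
Write `ℓ = log₂` and `h x = d (ℓ (2 + x))²`. For `z` beyond a threshold `K` (chosen using
`(log z)³ = o(z)`) we have both `h z < z` and `h z ≤ (ℓ z / 3)³`. Substituting `z = y³` turns the
second bound into `h (y³) ≤ (ℓ y)³`, so by monotonicity of `h` the invariant
`h^[i] x ≤ max K ((ℓ^[i] x)³)` propagates along the two iterations. Once `ℓ^[j] n ≤ 1`, the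
invariant puts `h^[j-1] (ℓ n)` below `K`, so `h` needs no more steps than `log*`.
-/

open Real Filter

noncomputable def logSqMap (d x : ℝ) : ℝ := d * logb 2 (2 + x) ^ 2

theorem logb_two_le_natCast_of_le_succ (k : ℕ) {x : ℝ} (hx : 0 < x) (hxk : x ≤ k + 1) :
    logb 2 x ≤ k := by
  have h2k : (k + 1 : ℝ) ≤ 2 ^ k := by exact_mod_cast Nat.lt_two_pow_self
  calc logb 2 x ≤ logb 2 (2 ^ k) := logb_le_logb_of_le one_lt_two hx (hxk.trans h2k)
    _ = k := by rw [logb_pow, logb_self_eq_one one_lt_two, mul_one]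

theorem exists_iterate_logb_two_le_one (x : ℝ) : ∃ j : ℕ, (logb 2)^[j] x ≤ 1 := by
  suffices ∀ k : ℕ, ∀ x : ℝ, x ≤ k → ∃ j : ℕ, (logb 2)^[j] x ≤ 1 from this _ x (Nat.le_ceil x)
  intro k
  induction k with
  | zero => exact fun x hx => ⟨0, by simp at hx ⊢; linarith⟩
  | succ k ih =>
    intro x hx
    by_cases hx1 : x ≤ 1
    · exact ⟨0, hx1⟩
    obtain ⟨j, hj⟩ :=
      ih (logb 2 x) (logb_two_le_natCast_of_le_succ k (by linarith) (by exact_mod_cast hx))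
    exact ⟨j + 1, hj⟩

theorem eventually_logb_two_div_three_pow_three_lt_self :
    ∀ᶠ z in atTop, (logb 2 z / 3) ^ 3 < z := by
  have hlog2 : 0 < log 2 := log_pos one_lt_two
  have hlittle : (fun z => (logb 2 z / 3) ^ 3) =o[atTop] id := by
    have := (isLittleO_pow_log_id_atTop (n := 3)).const_mul_left ((3 * log 2) ^ 3)⁻¹
    refine this.congr_left fun z => ?_
    rw [logb]; field_simp
  filter_upwards [hlittle.bound one_half_pos, eventually_gt_atTop 0] with z hbound hz
  simp only [id, norm_eq_abs, abs_of_pos hz] at hbound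
  linarith [le_abs_self ((logb 2 z / 3) ^ 3)]

namespace logSqMap

variable {d : ℝ}

theorem nonneg (hd : 0 ≤ d) (x : ℝ) : 0 ≤ logSqMap d x := by
  unfold logSqMap; positivity

theorem iterate_nonneg (hd : 0 ≤ d) {x : ℝ} (hx : 0 ≤ x) (i : ℕ) : 0 ≤ (logSqMap d)^[i] x := by
  cases i with
  | zero => exact hx
  | succ i => rw [Function.iterate_succ_apply']; exact nonneg hd _

theorem monotoneOn (hd : 0 ≤ d) : MonotoneOn (logSqMap d) (Set.Ici 0) := by
  intro a (ha : 0 ≤ a) b _ hab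
  have hloga : 0 ≤ logb 2 (2 + a) := logb_nonneg one_lt_two (by linarith)
  unfold logSqMap
  gcongr
  linarith

theorem le_mul_one_add_logb_sq (hd : 0 ≤ d) {x : ℝ} (hx : 2 ≤ x) :
    logSqMap d x ≤ d * (1 + logb 2 x) ^ 2 := by
  have hlog : logb 2 (2 + x) ≤ 1 + logb 2 x :=
    calc logb 2 (2 + x) ≤ logb 2 (2 * x) :=
          logb_le_logb_of_le one_lt_two (by linarith) (by linarith)
      _ = 1 + logb 2 x := by rw [logb_mul two_ne_zero (by linarith), logb_self_eq_one one_lt_two]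
  unfold logSqMap
  gcongr
  exact logb_nonneg one_lt_two (by linarith)

theorem eventually_le_logb_div_three_pow_three (hd : 0 ≤ d) :
    ∀ᶠ z in atTop, logSqMap d z ≤ (logb 2 z / 3) ^ 3 := by
  filter_upwards [eventually_ge_atTop 2,
    (tendsto_logb_atTop one_lt_two).eventually_ge_atTop (max 1 (108 * d))] with z hz hs
  set s := logb 2 z
  have hs1 : 1 ≤ s := le_of_max_le_left hs
  have hsd : 108 * d ≤ s := le_of_max_le_right hs
  calc logSqMap d z ≤ d * (1 + s) ^ 2 := le_mul_one_add_logb_sq hd hz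
    _ ≤ d * (2 * s) ^ 2 := by gcongr; linarith
    _ ≤ (s / 3) ^ 3 := by nlinarith [mul_nonneg (sq_nonneg s) (sub_nonneg.2 hsd)]

structure IsThreshold (d K : ℝ) : Prop where
  one_le : 1 ≤ K
  le_logb_div_three_pow_three : ∀ z, K ≤ z → logSqMap d z ≤ (logb 2 z / 3) ^ 3
  lt_self : ∀ z, K ≤ z → logSqMap d z < z

theorem exists_isThreshold (hd : 0 ≤ d) : ∃ K, IsThreshold d K := by
  obtain ⟨K, hK⟩ := eventually_atTop.1 <| (eventually_le_logb_div_three_pow_three hd).and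
    eventually_logb_two_div_three_pow_three_lt_self
  refine ⟨max K 1, le_max_right _ _, fun z hz => (hK z (le_of_max_le_left hz)).1,
    fun z hz => ?_⟩
  obtain ⟨hle, hlt⟩ := hK z (le_of_max_le_left hz)
  exact hle.trans_lt hlt

namespace IsThreshold

variable {K : ℝ}

theorem apply_max_pow_three_le (hK : IsThreshold d K) (y : ℝ) :
    logSqMap d (max K (y ^ 3)) ≤ max K (logb 2 y ^ 3) := by
  rcases le_or_gt (y ^ 3) K with hy | hy
  · rw [max_eq_left hy]
    exact (hK.lt_self K le_rfl).le.trans (le_max_left _ _)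
  · have hy0 : 0 < y := (Odd.pow_pos_iff (n := 3) (by decide)).1 (by linarith [hK.one_le])
    rw [max_eq_right hy.le]
    calc logSqMap d (y ^ 3) ≤ (logb 2 (y ^ 3) / 3) ^ 3 := hK.le_logb_div_three_pow_three _ hy.le
      _ = logb 2 y ^ 3 := by rw [logb_pow]; ring
      _ ≤ max K (logb 2 y ^ 3) := le_max_right _ _

theorem iterate_le_max_iterate_logb_pow_three (hd : 0 ≤ d) (hK : IsThreshold d K)
    {x : ℝ} (hx : 1 ≤ x) (i : ℕ) :
    (logSqMap d)^[i] x ≤ max K ((logb 2)^[i] x ^ 3) := by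
  induction i with
  | zero =>
    refine le_max_of_le_right ?_
    simp only [Function.iterate_zero_apply]
    nlinarith [mul_nonneg (mul_nonneg (by linarith : 0 ≤ x) (sub_nonneg.2 hx))
      (by linarith : 0 ≤ x + 1)]
  | succ i ih =>
    rw [Function.iterate_succ_apply', Function.iterate_succ_apply' (logb 2)]
    have hnonneg := iterate_nonneg hd (zero_le_one.trans hx) i
    exact (monotoneOn hd hnonneg (hnonneg.trans ih) ih).trans (hK.apply_max_pow_three_le _)

end IsThreshold

end logSqMap

open logSqMap in
theorem stmt_10 (d : ℝ) (hd : 1 ≤ d) :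
    ∃ K : ℝ, ∃ c : ℕ, 0 < K ∧ ∀ n : ℝ, 2 ≤ n →
      (∀ i : ℕ, K < (fun x => d * (Real.logb 2 (2 + x)) ^ 2)^[i] (Real.logb 2 n) →
        (fun x => d * (Real.logb 2 (2 + x)) ^ 2)^[i + 1] (Real.logb 2 n) <
          (fun x => d * (Real.logb 2 (2 + x)) ^ 2)^[i] (Real.logb 2 n)) ∧
      sInf {i : ℕ | (fun x => d * (Real.logb 2 (2 + x)) ^ 2)^[i] (Real.logb 2 n) ≤ K} ≤
        sInf {j : ℕ | (fun x => Real.logb 2 x)^[j] n ≤ 1} + c := by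
  obtain ⟨K, hK⟩ := exists_isThreshold (d := d) (by linarith)
  refine ⟨K, 0, by linarith [hK.one_le], fun n hn => ⟨fun i hi => ?_, ?_⟩⟩
  · rw [Function.iterate_succ_apply']
    exact hK.lt_self _ hi.le
  · have hlogn : 1 ≤ logb 2 n := by
      rwa [le_logb_iff_rpow_le one_lt_two (by linarith), rpow_one]
    change sInf {i : ℕ | (logSqMap d)^[i] (logb 2 n) ≤ K} ≤ sInf {j : ℕ | (logb 2)^[j] n ≤ 1} + 0
    set m := sInf {j : ℕ | (logb 2)^[j] n ≤ 1}
    have hm : (logb 2)^[m] n ≤ 1 := Nat.sInf_mem (exists_iterate_logb_two_le_one n)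
    obtain ⟨j, hj⟩ := Nat.exists_eq_add_one_of_ne_zero fun h0 : m = 0 => by
      rw [h0, Function.iterate_zero_apply] at hm
      linarith
    rw [hj, Function.iterate_succ_apply] at hm
    rw [hj, add_zero]
    refine (Nat.sInf_le ?_).trans j.le_succ
    refine (hK.iterate_le_max_iterate_logb_pow_three (by linarith) hlogn j).trans
      (max_le le_rfl ?_)
    calc (logb 2)^[j] (logb 2 n) ^ 3 ≤ 1 ^ 3 := (Odd.strictMono_pow (by decide)).monotone hm
      _ ≤ K := by rw [one_pow]; exact hK.one_le
end

section
/- Let a, b, c be positive integers with γ·b ≥ max(γ²·a, c) where γ = 3000. Then ΔΦ := f((a+b+1)/a) + f((a+b+1)/b) + f((a+b+c+2)/(a+b+1)) + f((a+b+c+2)/c) − f((a+b+c+2)/a) − f((a+b+c+2)/(b+c+1)) − f((b+c+1)/b) − f((b+c+1)/c) is at most an absolute constant C (independent of a,b,c). -/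
open Real Set

noncomputable def fOfLog (L : ℝ) : ℝ := L / logb 2 (2 + L) ^ 2

lemma two_sub_exp_one_div_le_log {u : ℝ} (hu : 0 < u) : 2 - exp 1 / u ≤ log u := by
  have h := log_le_sub_one_of_pos (div_pos (exp_pos 1) hu)
  rw [log_div (exp_pos 1).ne' hu.ne', log_exp] at h
  linarith

lemma two_mul_div_two_add_lt_log_two_add {L : ℝ} (hL : 0 ≤ L) : 2 * L / (2 + L) < log (2 + L) := by
  have hu : 0 < 2 + L := by linarith
  have h4 : 2 * L / (2 + L) = 2 - 4 / (2 + L) := by field_simp; ring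
  have he : 4 / (2 + L) > exp 1 / (2 + L) :=
    div_lt_div_of_pos_right (by linarith [exp_one_lt_d9]) hu
  linarith [two_sub_exp_one_div_le_log hu]

lemma div_log_two_add_sq_strictMonoOn :
    StrictMonoOn (fun L : ℝ => L / log (2 + L) ^ 2) (Ici 0) := by
  have hlog_pos : ∀ L ∈ Ici (0 : ℝ), 0 < log (2 + L) := fun L hL =>
    log_pos (by linarith [mem_Ici.mp hL])
  apply strictMonoOn_of_deriv_pos (convex_Ici 0)
  · exact continuousOn_id.div
      ((ContinuousOn.log (by fun_prop) fun L hL => (add_pos_of_pos_of_nonneg two_pos hL).ne').pow 2)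
      fun L hL => (pow_pos (hlog_pos L hL) 2).ne'
  · intro L hL
    rw [interior_Ici] at hL
    have hL0 : 0 < L := hL
    have hu : 0 < 2 + L := by linarith
    have hlog := hlog_pos L hL0.le
    have hderiv_log : HasDerivAt (fun L : ℝ => log (2 + L)) (1 / (2 + L)) L := by
      simpa [one_div] using ((hasDerivAt_id L).const_add 2).log hu.ne'
    have hderiv : HasDerivAt (fun L : ℝ => L / log (2 + L) ^ 2) _ L :=
      (hasDerivAt_id' L).div (hderiv_log.pow 2) (pow_pos hlog 2).ne'
    rw [hderiv.deriv]
    have hkey := two_mul_div_two_add_lt_log_two_add hL0.le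
    rw [div_lt_iff₀ hu] at hkey
    apply div_pos _ (by positivity)
    simp only [Nat.cast_ofNat, Nat.add_one_sub_one, pow_one]
    field_simp
    nlinarith

lemma fOfLog_monotoneOn : MonotoneOn fOfLog (Ici 0) := by
  intro x hx y hy hxy
  have hscale : ∀ L, fOfLog L = log 2 ^ 2 * (L / log (2 + L) ^ 2) := fun L => by
    unfold fOfLog logb
    field_simp
  rw [hscale, hscale]
  exact mul_le_mul_of_nonneg_left
    (div_log_two_add_sq_strictMonoOn.monotoneOn hx hy hxy) (sq_nonneg _)

lemma f_monotoneOn : MonotoneOn f (Ici 1) := fun x hx y hy hxy =>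
  fOfLog_monotoneOn (logb_nonneg one_lt_two hx) (logb_nonneg one_lt_two hy)
    (logb_le_logb_of_le one_lt_two (by linarith [mem_Ici.mp hx]) hxy)

lemma one_le_logb_two_add_logb {x : ℝ} (hx : 1 ≤ x) : 1 ≤ logb 2 (2 + logb 2 x) := by
  have h := logb_le_logb_of_le one_lt_two two_pos
    (le_add_of_nonneg_right (logb_nonneg one_lt_two hx))
  rwa [logb_self_eq_one one_lt_two] at h

lemma f_nonneg {x : ℝ} (hx : 1 ≤ x) : 0 ≤ f x :=
  div_nonneg (logb_nonneg one_lt_two hx) (sq_nonneg _)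

lemma f_le_logb {x : ℝ} (hx : 1 ≤ x) : f x ≤ logb 2 x :=
  div_le_self (logb_nonneg one_lt_two hx) (one_le_pow₀ (one_le_logb_two_add_logb hx))

lemma f_mul_le {k x : ℝ} (hk : 1 ≤ k) (hx : 1 ≤ x) : f (k * x) ≤ f x + logb 2 k := by
  have hLk := logb_nonneg one_lt_two hk
  have hLx := logb_nonneg one_lt_two hx
  have hmul : logb 2 (k * x) = logb 2 k + logb 2 x := logb_mul (by positivity) (by positivity)
  have hDx := one_le_logb_two_add_logb hx
  have hDx_le : logb 2 (2 + logb 2 x) ≤ logb 2 (2 + (logb 2 k + logb 2 x)) :=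
    logb_le_logb_of_le one_lt_two (by linarith) (by linarith)
  unfold f
  rw [hmul, add_div, add_comm]
  exact add_le_add
    (div_le_div_of_nonneg_left hLx (by positivity) (pow_le_pow_left₀ (by linarith) hDx_le 2))
    (div_le_self hLk (one_le_pow₀ (by linarith)))

lemma potential_change_le_three {a b c : ℝ} (ha : 0 < a) (hb : 1 ≤ b) (hc : 0 < c) (hab : a ≤ b) :
    f ((a + b + 1) / a) + f ((a + b + 1) / b) + f ((a + b + c + 2) / (a + b + 1)) +
      f ((a + b + c + 2) / c) - f ((a + b + c + 2) / a) -
      f ((a + b + c + 2) / (b + c + 1)) - f ((b + c + 1) / b) - f ((b + c + 1) / c) ≤ 3 := by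
  have hb0 : 0 < b := by linarith
  have hab1 : 0 < a + b + 1 := by linarith
  have hbc1 : 0 < b + c + 1 := by linarith
  have h_over_a : f ((a + b + 1) / a) ≤ f ((a + b + c + 2) / a) :=
    f_monotoneOn ((one_le_div ha).mpr (by linarith)) ((one_le_div ha).mpr (by linarith))
      (div_le_div_of_nonneg_right (by linarith) ha.le)
  have h_over_b : f ((a + b + 1) / b) ≤ 2 := calc
    f ((a + b + 1) / b) ≤ logb 2 ((a + b + 1) / b) := f_le_logb ((one_le_div hb0).mpr (by linarith))
    _ ≤ logb 2 (2 ^ 2) :=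
      logb_le_logb_of_le one_lt_two (by positivity) ((div_le_iff₀ hb0).mpr (by linarith))
    _ = 2 := by rw [logb_pow, logb_self_eq_one one_lt_two]; norm_num
  have h_middle : f ((a + b + c + 2) / (a + b + 1)) ≤ f ((b + c + 1) / b) :=
    f_monotoneOn ((one_le_div hab1).mpr (by linarith)) ((one_le_div hb0).mpr (by linarith))
      ((div_le_div_iff₀ hab1 hb0).mpr (by nlinarith))
  have h_over_c : f ((a + b + c + 2) / c) ≤ f ((b + c + 1) / c) + 1 := by
    have hk : (a + b + c + 2) / (b + c + 1) ≤ 2 := (div_le_iff₀ hbc1).mpr (by linarith)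
    have hlogb_k : logb 2 ((a + b + c + 2) / (b + c + 1)) ≤ 1 := by
      simpa using logb_le_logb_of_le one_lt_two (by positivity) hk
    have h := f_mul_le (k := (a + b + c + 2) / (b + c + 1)) (x := (b + c + 1) / c)
      ((one_le_div hbc1).mpr (by linarith)) ((one_le_div hc).mpr (by linarith))
    rw [div_mul_div_cancel₀ hbc1.ne'] at h
    linarith
  have h_nonneg : 0 ≤ f ((a + b + c + 2) / (b + c + 1)) := f_nonneg ((one_le_div hbc1).mpr (by linarith))
  linarith

theorem stmt_11 : ∃ C : ℝ, ∀ a b c : ℝ,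
    (∃ a' : ℕ, 0 < a' ∧ a = a') → (∃ b' : ℕ, 0 < b' ∧ b = b') → (∃ c' : ℕ, 0 < c' ∧ c = c') →
    (3000 : ℝ) * b ≥ max ((3000 : ℝ) ^ 2 * a) c →
    f ((a + b + 1) / a) + f ((a + b + 1) / b) + f ((a + b + c + 2) / (a + b + 1)) +
      f ((a + b + c + 2) / c) - f ((a + b + c + 2) / a) -
      f ((a + b + c + 2) / (b + c + 1)) - f ((b + c + 1) / b) - f ((b + c + 1) / c) ≤ C := by
  refine ⟨3, ?_⟩
  rintro a b c ⟨a', ha', rfl⟩ ⟨b', hb', rfl⟩ ⟨c', hc', rfl⟩ hmax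
  have hab : (a' : ℝ) ≤ b' := by nlinarith [le_of_max_le_left hmax]
  exact potential_change_le_three (by positivity) (by exact_mod_cast hb') (by positivity) hab
end

section
/- For positive integers a, b with 1/γ ≤ a/b ≤ γ (γ = 3000), f((a+b+1)/a) + f((a+b+1)/b) ≤ 0.95, where f(x) = log₂(x)/(log₂(2+log₂ x))². -/
/-!
With `u = log₂ x` we have `f x = u / log₂ (2 + u) ^ 2`, which is increasing in `u ≥ 0` because
`(2 + u) log (2 + u) ≥ 2u`; so `f` is increasing on `[1, ∞)`. For `A ≥ B ≥ 1` the arguments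
`x = (A + B + 1) / A ≤ 3` and `y = (A + B + 1) / B ≤ 3002` satisfy `(x - 1) (y - 2) ≤ 2`.
Cutting `x` at `11/10, 3/2, 2, 5/2` bounds `y` on the successive pieces by `3002, 22, 6, 4, 10/3`,
and by monotonicity it remains to bound `f` at these ten points. Each bound
`f X ≤ (p/q) / (r/s)²` is certified by the integer power inequalities `X ^ q ≤ 2 ^ p` and
`2 ^ r ≤ (2 + p/q) ^ s`, i.e. `log₂ X ≤ p/q` and `r/s ≤ log₂ (2 + p/q)`.
-/

open Real Set

lemma two_mul_sub_le_mul_log {w : ℝ} (hw : 2 ≤ w) : 2 * (w - 2) ≤ w * log w := by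
  have hw0 : 0 < w := by linarith
  -- `1 - 1/t ≤ log t` at `t = w / 4`, together with `log 4 = 2 log 2 > 1`
  have h := one_sub_inv_le_log_of_pos (div_pos hw0 four_pos)
  rw [log_div hw0.ne' four_ne_zero, show (4 : ℝ) = 2 ^ 2 by norm_num, log_pow, inv_div] at h
  have h4w : w * (4 / w) = 4 := by field_simp
  nlinarith [log_two_gt_d9]

lemma hasDerivAt_div_log_two_add_sq {u : ℝ} (hu : 0 ≤ u) :
    HasDerivAt (fun t => t / log (2 + t) ^ 2)
      (((2 + u) * log (2 + u) - 2 * u) / ((2 + u) * log (2 + u) ^ 3)) u := by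
  have h2u : 0 < 2 + u := by linarith
  have hlog : 0 < log (2 + u) := log_pos (by linarith)
  have hlog2 : HasDerivAt (fun t => log (2 + t)) (1 / (2 + u)) u := by
    simpa [one_div] using ((hasDerivAt_id u).const_add 2).log h2u.ne'
  refine ((hasDerivAt_id' u).div (hlog2.fun_pow 2) (by positivity)).congr_deriv ?_
  field_simp
  ring

lemma monotoneOn_div_log_two_add_sq : MonotoneOn (fun u => u / log (2 + u) ^ 2) (Ici 0) := by
  refine monotoneOn_of_hasDerivWithinAt_nonneg (convex_Ici 0) ?_
    (fun u hu => (hasDerivAt_div_log_two_add_sq (interior_subset hu).out).hasDerivWithinAt) ?_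
  · exact fun u hu => (hasDerivAt_div_log_two_add_sq hu.out).continuousAt.continuousWithinAt
  · intro u hu
    have hu : 0 ≤ u := (interior_subset hu).out
    have := two_mul_sub_le_mul_log (le_add_of_nonneg_right hu)
    have hlog : 0 < log (2 + u) := log_pos (by linarith)
    exact div_nonneg (by linarith) (by positivity)

lemma monotoneOn_div_logb_two_add_sq (b : ℝ) :
    MonotoneOn (fun u => u / logb b (2 + u) ^ 2) (Ici 0) := by
  intro u hu v hv huv
  simp only [logb, div_pow, div_div_eq_mul_div]
  rw [mul_div_right_comm u, mul_div_right_comm v]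
  exact mul_le_mul_of_nonneg_right (monotoneOn_div_log_two_add_sq hu hv huv) (sq_nonneg _)

lemma logb_le_div_of_pow_le_pow {b x : ℝ} {p q : ℕ} (hb : 1 < b) (hx : 0 < x) (hq : 0 < q)
    (h : x ^ q ≤ b ^ p) : logb b x ≤ p / q := by
  rw [le_div_iff₀ (by positivity), mul_comm, ← logb_pow]
  calc logb b (x ^ q) ≤ logb b (b ^ p) := logb_le_logb_of_le hb (by positivity) h
    _ = p := by rw [logb_pow, logb_self_eq_one hb, mul_one]

lemma div_le_logb_of_pow_le_pow {b y : ℝ} {r s : ℕ} (hb : 1 < b) (hs : 0 < s)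
    (h : b ^ r ≤ y ^ s) : r / s ≤ logb b y := by
  rw [div_le_iff₀ (by positivity), mul_comm, ← logb_pow]
  calc (r : ℝ) = logb b (b ^ r) := by rw [logb_pow, logb_self_eq_one hb, mul_one]
    _ ≤ logb b (y ^ s) := logb_le_logb_of_le hb (by positivity) h

lemma f_le_of_pow_le_two_pow {x X : ℝ} {p q r s : ℕ} (hx : 1 ≤ x) (hxX : x ≤ X)
    (hX : X ^ q ≤ 2 ^ p) (h2 : (2 : ℝ) ^ r ≤ (2 + p / q) ^ s)
    (hq : 0 < q := by norm_num) (hr : 0 < r := by norm_num) (hs : 0 < s := by norm_num) :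
    f x ≤ p / q / (r / s) ^ 2 := by
  have hu : 0 ≤ logb 2 x := logb_nonneg one_lt_two hx
  have huU : logb 2 x ≤ p / q := logb_le_div_of_pow_le_pow one_lt_two (by linarith) hq
    ((pow_le_pow_left₀ (by linarith) hxX q).trans hX)
  have hrs : (r / s : ℝ) ≤ logb 2 (2 + p / q) :=
    div_le_logb_of_pow_le_pow one_lt_two hs h2
  calc f x ≤ p / q / logb 2 (2 + p / q) ^ 2 :=
        monotoneOn_div_logb_two_add_sq 2 hu (hu.trans huU) huU
    _ ≤ p / q / (r / s) ^ 2 := by gcongr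

lemma f_add_f_le_of_mul_le_two {x y : ℝ} (hx : 1 ≤ x) (hy : 1 ≤ y) (hx3 : x ≤ 3)
    (hy3002 : y ≤ 3002) (hxy : (x - 1) * (y - 2) ≤ 2) : f x + f y ≤ 0.95 := by
  rcases le_or_gt x (11 / 10) with h₁ | h₁
  · have hfx := f_le_of_pow_le_two_pow (p := 4) (q := 29) (r := 12) (s := 11) hx h₁
      (by norm_num) (by norm_num)
    have hfy := f_le_of_pow_le_two_pow (p := 58) (q := 5) (r := 15) (s := 4) hy hy3002
      (by norm_num) (by norm_num)
    norm_num at hfx hfy ⊢; linarith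
  rcases le_or_gt x (3 / 2) with h₂ | h₂
  · have hy22 : y ≤ 22 := by nlinarith
    have hfx := f_le_of_pow_le_two_pow (p := 10) (q := 17) (r := 26) (s := 19) hx h₂
      (by norm_num) (by norm_num)
    have hfy := f_le_of_pow_le_two_pow (p := 9) (q := 2) (r := 27) (s := 10) hy hy22
      (by norm_num) (by norm_num)
    norm_num at hfx hfy ⊢; linarith
  rcases le_or_gt x 2 with h₃ | h₃
  · have hy6 : y ≤ 6 := by nlinarith
    have hfx := f_le_of_pow_le_two_pow (p := 1) (q := 1) (r := 19) (s := 12) hx h₃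
      (by norm_num) (by norm_num)
    have hfy := f_le_of_pow_le_two_pow (p := 13) (q := 5) (r := 11) (s := 5) hy hy6
      (by norm_num) (by norm_num)
    norm_num at hfx hfy ⊢; linarith
  rcases le_or_gt x (5 / 2) with h₄ | h₄
  · have hy4 : y ≤ 4 := by nlinarith
    have hfx := f_le_of_pow_le_two_pow (p := 4) (q := 3) (r := 33) (s := 19) hx h₄
      (by norm_num) (by norm_num)
    have hfy := f_le_of_pow_le_two_pow (p := 2) (q := 1) (r := 2) (s := 1) hy hy4
      (by norm_num) (by norm_num)
    norm_num at hfx hfy ⊢; linarith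
  · have hy5 : y ≤ 10 / 3 := by nlinarith
    have hfx := f_le_of_pow_le_two_pow (p := 27) (q := 17) (r := 35) (s := 19) hx hx3
      (by norm_num) (by norm_num)
    have hfy := f_le_of_pow_le_two_pow (p := 40) (q := 23) (r := 78) (s := 41) hy hy5
      (by norm_num) (by norm_num)
    norm_num at hfx hfy ⊢; linarith

lemma f_add_f_div_le {A B : ℝ} (hB : 1 ≤ B) (hBA : B ≤ A) (hA : A ≤ 3000 * B) :
    f ((A + B + 1) / A) + f ((A + B + 1) / B) ≤ 0.95 := by
  have hA0 : 0 < A := by linarith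
  have hB0 : 0 < B := by linarith
  have hxy : ((A + B + 1) / A - 1) * ((A + B + 1) / B - 2) = (B + 1) * (A + 1 - B) / (A * B) := by
    field_simp
    ring
  apply f_add_f_le_of_mul_le_two
  · rw [le_div_iff₀ hA0]; linarith
  · rw [le_div_iff₀ hB0]; linarith
  · rw [div_le_iff₀ hA0]; linarith
  · rw [div_le_iff₀ hB0]; linarith
  · rw [hxy, div_le_iff₀ (by positivity)]; nlinarith

theorem stmt_14 (a b : ℕ) (ha : 0 < a) (hb : 0 < b)
    (h1 : 1 / (3000 : ℝ) ≤ (a : ℝ) / b) (h2 : (a : ℝ) / b ≤ 3000) :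
    f (((a : ℝ) + b + 1) / a) + f (((a : ℝ) + b + 1) / b) ≤ 0.95 := by
  have ha1 : (1 : ℝ) ≤ a := by exact_mod_cast ha
  have hb1 : (1 : ℝ) ≤ b := by exact_mod_cast hb
  rcases le_total (b : ℝ) a with hba | hab
  · rw [div_le_iff₀ (by positivity)] at h2
    exact f_add_f_div_le hb1 hba h2
  · rw [div_le_div_iff₀ (by norm_num) (by positivity)] at h1
    have := f_add_f_div_le ha1 hab (by linarith)
    rwa [add_comm (b : ℝ) a, add_comm] at this
end
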